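/- arXiv:2101.01407 — 8 statements merged into one kernel-verified Lean document; each statement's English description precedes it below -/
import Mathlib

section
/- Let c00,c01,c10,c11 and b00,b01,b10,b11 be real numbers with K := b10 − c10 − b00 + c00 > 0, and let P11, P10 be real numbers with t := P11 − P10. Then E[P|w=1] > E[P|w=0] if and only if t > γ + δ·P11. (The cost-sensitive causal classification decision boundary, Equation 16, derived from Equation 14.) -/
/-! The expected causal profit `E[P|w=1] - E[P|w=0]` is affine in `P11` and `P10`, and factors as
`K * (t - (γ + δ * P11))`; since `K > 0`, its sign is that of `t - (γ + δ * P11)`. -/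

theorem causal_profit_eq_mul (c00 c01 c10 c11 b00 b01 b10 b11 P11 P10 : ℝ)
    (hK : b10 - c10 - b00 + c00 ≠ 0) :
    P11 * (b11 - c11) + (1 - P11) * (b01 - c01) - (P10 * (b10 - c10) + (1 - P10) * (b00 - c00)) =
      (b10 - c10 - b00 + c00) *
        (P11 - P10 - ((b00 - c00 - b01 + c01) / (b10 - c10 - b00 + c00) +
          (b10 - c10 + b01 - c01 - b11 + c11 - b00 + c00) / (b10 - c10 - b00 + c00) * P11)) := by
  field_simp
  ring

/-- the cost-sensitive causal classification decision boundary. -/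
theorem cost_sensitive_causal_boundary (c00 c01 c10 c11 b00 b01 b10 b11 P11 P10 : ℝ)
    (hK : b10 - c10 - b00 + c00 > 0) :
    P11 * (b11 - c11) + (1 - P11) * (b01 - c01) >
        P10 * (b10 - c10) + (1 - P10) * (b00 - c00) ↔
      P11 - P10 >
        (b00 - c00 - b01 + c01) / (b10 - c10 - b00 + c00) +
          (b10 - c10 + b01 - c01 - b11 + c11 - b00 + c00) / (b10 - c10 - b00 + c00) * P11 := by
  rw [gt_iff_lt, ← sub_pos, causal_profit_eq_mul _ _ _ _ _ _ _ _ _ _ hK.ne', mul_pos_iff_of_pos_left hK,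
    sub_pos]
end

section
/- Let c00,c01,c10,c11 and b00,b01,b10,b11 be real numbers with K := b10 − c10 − b00 + c00 ≠ 0, and let P11, P10 be real numbers with t := P11 − P10. Then the expected causal profit vanishes, E[Ṗ] = 0, if and only if t = γ + δ·P11, i.e., the set of instances with zero expected causal profit is exactly the cost-sensitive causal classification decision boundary. -/
theorem expected_causal_profit_eq_mul_sub_boundary
    (c00 c01 c10 c11 b00 b01 b10 b11 P11 P10 : ℝ)
    (hK : b10 - c10 - b00 + c00 ≠ 0) :
    (P11 * (b11 - c11) + (1 - P11) * (b01 - c01)) -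
        (P10 * (b10 - c10) + (1 - P10) * (b00 - c00)) =
      (b10 - c10 - b00 + c00) *
        (P11 - P10 -
          ((b00 - c00 - b01 + c01) / (b10 - c10 - b00 + c00) +
            (b10 - c10 + b01 - c01 - b11 + c11 - b00 + c00) / (b10 - c10 - b00 + c00) * P11)) := by
  field_simp
  ring

/-- the expected causal profit vanishes exactly on the
cost-sensitive causal classification decision boundary. -/
theorem expected_causal_profit_zero_iff_on_boundary
    (c00 c01 c10 c11 b00 b01 b10 b11 P11 P10 : ℝ)
    (hK : b10 - c10 - b00 + c00 ≠ 0) :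
    (P11 * (b11 - c11) + (1 - P11) * (b01 - c01)) -
        (P10 * (b10 - c10) + (1 - P10) * (b00 - c00)) = 0 ↔
      P11 - P10 =
        (b00 - c00 - b01 + c01) / (b10 - c10 - b00 + c00) +
          (b10 - c10 + b01 - c01 - b11 + c11 - b00 + c00) / (b10 - c10 - b00 + c00) * P11 := by
  rw [expected_causal_profit_eq_mul_sub_boundary c00 c01 c10 c11 b00 b01 b10 b11 P11 P10 hK,
    mul_eq_zero, sub_eq_zero]
  exact or_iff_right hK
end

section
/- Let b10 > 0, c01 ≥ 0, and let c11, b11 be real numbers. Then there exists a pair (P11, t) in the feasible set with t > γ' + δ'·P11 (i.e., the positive treatment set is nonempty) if and only if c11 < b11. (Theorem 2: the positive treatment set is nonempty if and only if the causal profitability condition holds.) -/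
/-!
On the feasible set `t ≤ P11`, so `t - γ - δ P11 ≤ P11 (1 - γ - δ) - (1 - P11) γ`, which is
`≤ 0` as soon as `γ + δ ≥ 1` because `γ ≥ 0`. Conversely, if `γ + δ < 1` the corner
`(P11, t) = (1, 1)` lies strictly above the line. For `γ = γ'`, `δ = δ'` the quantity
`1 - γ' - δ'` is `(b11 - c11) / b10`.
-/

def feasibleSet : Set (ℝ × ℝ) :=
  {p | 0 ≤ p.1 ∧ p.1 ≤ 1 ∧ p.1 - 1 ≤ p.2 ∧ p.2 ≤ p.1}

def positiveTreatmentSet (γ δ : ℝ) : Set (ℝ × ℝ) :=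
  {p | p ∈ feasibleSet ∧ γ + δ * p.1 < p.2}

lemma one_one_mem_feasibleSet : ((1, 1) : ℝ × ℝ) ∈ feasibleSet := by
  norm_num [feasibleSet]

lemma sub_line_le_mul_of_mem_feasibleSet {γ δ : ℝ} (hγ : 0 ≤ γ) {p : ℝ × ℝ}
    (hp : p ∈ feasibleSet) : p.2 - (γ + δ * p.1) ≤ p.1 * (1 - (γ + δ)) := by
  obtain ⟨-, hP1, -, htP⟩ := hp
  nlinarith [mul_nonneg hγ (sub_nonneg.2 hP1)]

lemma positiveTreatmentSet_nonempty_iff {γ δ : ℝ} (hγ : 0 ≤ γ) :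
    (positiveTreatmentSet γ δ).Nonempty ↔ γ + δ < 1 := by
  constructor
  · rintro ⟨p, hp, hpos⟩
    have hbound := sub_line_le_mul_of_mem_feasibleSet (δ := δ) hγ hp
    by_contra! hge
    nlinarith [mul_nonneg hp.1 (sub_nonneg.2 hge)]
  · intro h
    exact ⟨(1, 1), one_one_mem_feasibleSet, by simpa using h⟩

lemma costBenefitRatios_add_lt_one_iff {b10 c01 c11 b11 : ℝ} (hb : 0 < b10) :
    c01 / b10 + (b10 - b11 + c11 - c01) / b10 < 1 ↔ c11 < b11 := by
  rw [← add_div, div_lt_one hb]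
  constructor <;> intro h <;> linarith

/-- Theorem 2: the positive treatment set is nonempty if and only if the
causal profitability condition `c11 < b11` holds. -/
theorem positive_treatment_set_nonempty_iff
    (b10 c01 c11 b11 : ℝ) (hb : b10 > 0) (hc : c01 ≥ 0) :
    (∃ P11 t : ℝ, 0 ≤ P11 ∧ P11 ≤ 1 ∧ P11 - 1 ≤ t ∧ t ≤ P11 ∧
        t > c01 / b10 + (b10 - b11 + c11 - c01) / b10 * P11) ↔
      c11 < b11 := by
  rw [← costBenefitRatios_add_lt_one_iff hb,
    ← positiveTreatmentSet_nonempty_iff (δ := (b10 - b11 + c11 - c01) / b10)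
      (div_nonneg hc hb.le)]
  simp only [Set.Nonempty, Prod.exists, positiveTreatmentSet, feasibleSet, Set.mem_ofPred_eq,
    and_assoc, gt_iff_lt]
end

section
/- Let b10 > 0, c01 ≥ 0, and let c11, b11 be real numbers with c11 > b11. Then the positive treatment set is empty: there is no pair (P11, t) with 0 ≤ P11 ≤ 1, P11 − 1 ≤ t ≤ P11 and t > γ' + δ'·P11. (Corollary 1: if the cost of a positive converted instance exceeds its benefit, no causal profit can be obtained from applying the positive treatment.) -/
/-- Corollary 1: if the cost of a positive converted instance exceeds its
benefit, the positive treatment set is empty. -/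
theorem positive_treatment_set_empty
    (b10 c01 c11 b11 : ℝ) (hb : b10 > 0) (hc : c01 ≥ 0) (h : c11 > b11) :
    ¬ ∃ P11 t : ℝ, 0 ≤ P11 ∧ P11 ≤ 1 ∧ P11 - 1 ≤ t ∧ t ≤ P11 ∧
        t > c01 / b10 + (b10 - b11 + c11 - c01) / b10 * P11 := by
  rintro ⟨P, t, h0, h1, _, ht, hgt⟩
  have := mul_lt_mul_of_pos_right hgt hb
  rw [add_mul, div_mul_cancel₀ _ hb.ne', mul_right_comm, div_mul_cancel₀ _ hb.ne'] at this
  nlinarith [mul_nonneg hc (sub_nonneg.2 h1), mul_nonneg (sub_pos.2 h).le h0]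
end

section
/- Let b10 > 0, c01 ≥ 0, and let c11, b11 be real numbers. Then there exists a pair (P11, t) in the feasible set with t < 0 and t > γ' + δ'·P11 (i.e., the positive treatment set contains a pair with negative estimated individual treatment effect) if and only if c11 < b11 − b10. (Theorem 3: the positive treatment set contains pairs (P11, t) with t < 0 if and only if the causal bonus condition is satisfied.) -/
/-!
Write `γ = c01 / b10 ≥ 0` and `δ = (b10 - b11 + c11 - c01) / b10`, so that the threshold line is
`t = γ + δ P` and `γ + δ < 0` is exactly the causal bonus condition. If `γ + δ ≥ 0`, the line is
nonnegative on `[0, 1]` (it is nonnegative at both ends), so no point above it has `t < 0`. If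
`γ + δ < 0`, the line dips below the lower boundary `t = P - 1` of the feasible set just left of
`P = 1`, and a point on that boundary with `t = (γ + δ) / (2 (1 - δ))` lies above the line.
-/

lemma add_mul_nonneg_of_mem_Icc {γ δ P : ℝ} (hγ : 0 ≤ γ) (hγδ : 0 ≤ γ + δ)
    (hP0 : 0 ≤ P) (hP1 : P ≤ 1) : 0 ≤ γ + δ * P := by
  have hconvex : γ + δ * P = (1 - P) * γ + P * (γ + δ) := by ring
  rw [hconvex]
  exact add_nonneg (mul_nonneg (by linarith) hγ) (mul_nonneg hP0 hγδ)

theorem exists_neg_above_line_iff {γ δ : ℝ} (hγ : 0 ≤ γ) :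
    (∃ P t : ℝ, 0 ≤ P ∧ P ≤ 1 ∧ P - 1 ≤ t ∧ t ≤ P ∧ t < 0 ∧ t > γ + δ * P) ↔ γ + δ < 0 := by
  constructor
  · rintro ⟨P, t, hP0, hP1, -, -, ht, hline⟩
    by_contra! hγδ
    linarith [add_mul_nonneg_of_mem_Icc hγ hγδ hP0 hP1]
  · intro hγδ
    have hslope : 0 < 1 - δ := by linarith
    set t := (γ + δ) / (2 * (1 - δ)) with ht
    have ht_neg : t < 0 := div_neg_of_neg_of_pos hγδ (by linarith)
    have ht_scaled : t * (1 - δ) = (γ + δ) / 2 := by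
      rw [ht]; field_simp
    refine ⟨1 + t, t, ?_, by linarith, by linarith, by linarith, ht_neg, ?_⟩
    · -- `-(γ + δ) < 1 - δ`, so `t > -1/2`
      nlinarith
    · linarith

lemma cost_benefit_ratios_add_neg_iff {b10 c01 c11 b11 : ℝ} (hb : 0 < b10) :
    c01 / b10 + (b10 - b11 + c11 - c01) / b10 < 0 ↔ c11 < b11 - b10 := by
  rw [← add_div, div_lt_iff₀ hb, zero_mul]
  constructor <;> intro h <;> linarith

/-- Theorem 3: the positive treatment set contains pairs (P11, t) with
t < 0 if and only if the causal bonus condition `c11 < b11 - b10` is satisfied. -/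
theorem positive_treatment_set_negative_ite_iff
    (b10 c01 c11 b11 : ℝ) (hb : b10 > 0) (hc : c01 ≥ 0) :
    (∃ P11 t : ℝ, 0 ≤ P11 ∧ P11 ≤ 1 ∧ P11 - 1 ≤ t ∧ t ≤ P11 ∧ t < 0 ∧
        t > c01 / b10 + (b10 - b11 + c11 - c01) / b10 * P11) ↔
      c11 < b11 - b10 := by
  rw [exists_neg_above_line_iff (div_nonneg hc hb.le)]
  exact cost_benefit_ratios_add_neg_iff hb
end

section
/- Let b10 > 0, c01 ≥ 0, and let c11, b11 be real numbers with c11 ≥ b11 − b10 (which in particular holds whenever b11 ≤ b10 and c11 ≥ 0). Then every pair (P11, t) in the feasible set with t > γ' + δ'·P11 satisfies t ≥ 0, i.e., the positive treatment set contains no pair with negative estimated individual treatment effect. (Corollary 2.) -/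
/-- Corollary 2: if the causal bonus condition fails, the positive
treatment set contains no pair with negative estimated individual treatment effect. -/
theorem positive_treatment_set_no_negative_ite
    (b10 c01 c11 b11 : ℝ) (hb : b10 > 0) (hc : c01 ≥ 0) (h : c11 ≥ b11 - b10) :
    ∀ P11 t : ℝ, 0 ≤ P11 → P11 ≤ 1 → P11 - 1 ≤ t → t ≤ P11 →
      t > c01 / b10 + (b10 - b11 + c11 - c01) / b10 * P11 → t ≥ 0 := by
  intro P11 t h0 h1 _ _ ht
  have key : c01 / b10 + (b10 - b11 + c11 - c01) / b10 * P11 =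
      (c01 * (1 - P11) + (b10 - b11 + c11) * P11) / b10 := by ring
  have hnum : 0 ≤ c01 * (1 - P11) + (b10 - b11 + c11) * P11 := by
    have := mul_nonneg hc (by linarith : (0:ℝ) ≤ 1 - P11)
    have := mul_nonneg (by linarith : (0:ℝ) ≤ b10 - b11 + c11) h0
    linarith
  have : 0 ≤ (c01 * (1 - P11) + (b10 - b11 + c11) * P11) / b10 :=
    div_nonneg hnum hb.le
  linarith [key ▸ ht]
end

section
/- Let c00,c01,c10,c11 and b00,b01,b10,b11 be real numbers with K := b10 − c10 − b00 + c00 > 0, let P11, P10 be real numbers, set t := P11 − P10, and define the displacement from the decision boundary d := (t − δ·P11 − γ)/√(δ² + 1). Then the expected causal profit satisfies E[Ṗ] = E[P|w=1] − E[P|w=0] = K·√(δ² + 1)·d; in particular, the displacement from the decision boundary is proportional, with positive proportionality constant, to the expected causal profit. (Proposition 3.) -/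
/-- Proposition 3: the displacement from the cost-sensitive causal decision
boundary is proportional, with positive proportionality constant, to the expected causal
profit. -/
theorem displacement_proportional_to_expected_causal_profit
    (c00 c01 c10 c11 b00 b01 b10 b11 P11 P10 K γ δ t d : ℝ)
    (hKdef : K = b10 - c10 - b00 + c00) (hK : K > 0)
    (hγ : γ = (b00 - c00 - b01 + c01) / K)
    (hδ : δ = (b10 - c10 + b01 - c01 - b11 + c11 - b00 + c00) / K)
    (ht : t = P11 - P10)
    (hd : d = (t - δ * P11 - γ) / Real.sqrt (δ ^ 2 + 1)) :
    (P11 * (b11 - c11) + (1 - P11) * (b01 - c01)) -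
        (P10 * (b10 - c10) + (1 - P10) * (b00 - c00)) =
      K * Real.sqrt (δ ^ 2 + 1) * d := by
  have hs : Real.sqrt (δ ^ 2 + 1) ≠ 0 := by
    positivity
  have hK0 : K ≠ 0 := ne_of_gt hK
  subst hd ht hγ hδ hKdef
  field_simp
  ring
end

section
/- Let c00,c01,c10,c11 and b00,b01,b10,b11 be real numbers with K := b10 − c10 − b00 + c00 > 0. For two instances with treatment-conditional positive outcome probabilities (P11, P10) and (P11', P10'), individual treatment effects t := P11 − P10 and t' := P11' − P10', and displacements d := (t − δ·P11 − γ)/√(δ² + 1) and d' := (t' − δ·P11' − γ)/√(δ² + 1), one has d > d' if and only if E[Ṗ] > E[Ṗ'], where E[Ṗ] and E[Ṗ'] are the respective expected causal profits. (Correctness of the expected causal profit ranker: ranking instances by displacement from the cost-sensitive decision boundary is equivalent to ranking them by expected causal profit.) -/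
/-- correctness of the expected causal profit ranker — ranking instances by
displacement from the cost-sensitive decision boundary is equivalent to ranking them by
expected causal profit. -/
theorem ecp_ranker_correct
    (c00 c01 c10 c11 b00 b01 b10 b11 : ℝ)
    (P11 P10 P11' P10' K γ δ t t' d d' : ℝ)
    (hKdef : K = b10 - c10 - b00 + c00) (hK : K > 0)
    (hγ : γ = (b00 - c00 - b01 + c01) / K)
    (hδ : δ = (b10 - c10 + b01 - c01 - b11 + c11 - b00 + c00) / K)
    (ht : t = P11 - P10) (ht' : t' = P11' - P10')
    (hd : d = (t - δ * P11 - γ) / Real.sqrt (δ ^ 2 + 1))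
    (hd' : d' = (t' - δ * P11' - γ) / Real.sqrt (δ ^ 2 + 1)) :
    d > d' ↔
      (P11 * (b11 - c11) + (1 - P11) * (b01 - c01)) -
          (P10 * (b10 - c10) + (1 - P10) * (b00 - c00)) >
        (P11' * (b11 - c11) + (1 - P11') * (b01 - c01)) -
          (P10' * (b10 - c10) + (1 - P10') * (b00 - c00)) := by
  have hK0 : K ≠ 0 := ne_of_gt hK
  have hs : (0:ℝ) < Real.sqrt (δ ^ 2 + 1) :=
    Real.sqrt_pos.mpr (by positivity)
  have e1 : K * (t - δ * P11 - γ) =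
      (P11 * (b11 - c11) + (1 - P11) * (b01 - c01)) -
        (P10 * (b10 - c10) + (1 - P10) * (b00 - c00)) := by
    subst ht hγ hδ hKdef; field_simp; ring
  have e2 : K * (t' - δ * P11' - γ) =
      (P11' * (b11 - c11) + (1 - P11') * (b01 - c01)) -
        (P10' * (b10 - c10) + (1 - P10') * (b00 - c00)) := by
    subst ht' hγ hδ hKdef; field_simp; ring
  rw [hd, hd', gt_iff_lt, div_lt_div_iff_of_pos_right hs, ← mul_lt_mul_iff_right₀ hK, e1, e2]
end
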